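/- arXiv:1704.07254 — 2 statements merged into one kernel-verified Lean document; each statement's English description precedes it below -/
import Mathlib

section
/- An apple of weight a (a ranked tree with a root of rank 2, one depth-one child of rank 0, and a depth-one children of rank 1, where a ≥ 1) is not a Union-Find tree. -/
/-!
Collapsing never changes ranks, so the number of rank-0 nodes and the number of nodes of positive
rank only move under merges. By induction, the rank-0 nodes are at least as many as the others,
and strictly more while the root has rank 0: a merge that raises a root from rank 0 to rank 1 turns
one rank-0 node into a positive-rank node, and it is paid for by the strict surpluses of both merged
trees. An apple of weight `a ≥ 1` has a single rank-0 node against `a + 1` of positive rank.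
-/

open scoped Classical

/-- The raw data of a ranked tree: a node set `V`, a root, a parent map
(with `parent root = root` by convention) and a rank function. -/
structure PreTree (V : Type) where
  root : V
  parent : V → V
  rank : V → ℕ

namespace PreTree

variable {V W : Type}

/-- `Anc t x y` : `x` is a (weak) ancestor of `y` in `t`, i.e. `x = parent^[k] y`. -/
def Anc (t : PreTree V) (x y : V) : Prop := ∃ k : ℕ, t.parent^[k] y = x

/-- `t` is a tree: the parent map fixes the root and every node reaches the root. -/
def IsTree (t : PreTree V) : Prop :=
  t.parent t.root = t.root ∧ ∀ x, t.Anc t.root x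

/-- The rank strictly decreases from parent to child. -/
def RankDec (t : PreTree V) : Prop :=
  ∀ x, x ≠ t.root → t.rank x < t.rank (t.parent x)

/-- A ranked tree: a tree whose rank function strictly decreases towards the leaves. -/
def IsRanked (t : PreTree V) : Prop := t.IsTree ∧ t.RankDec

/-- `push t x y` : reattach `x` as a child of `y`, everything else unchanged. -/
noncomputable def push (t : PreTree V) (x y : V) : PreTree V :=
  ⟨t.root, Function.update t.parent x y, t.rank⟩

/-- `x` and `y` are (distinct, non-root) siblings in `t`. -/
def Siblings (t : PreTree V) (x y : V) : Prop :=
  x ≠ y ∧ x ≠ t.root ∧ y ≠ t.root ∧ t.parent x = t.parent y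

/-- One push step: `t ⊢ t'`. -/
def PushStep (t t' : PreTree V) : Prop :=
  ∃ x y, t.Siblings x y ∧ t.rank x < t.rank y ∧ t' = t.push x y

/-- Merge of two trees on disjoint node sets: attach `root s` below `root t`,
incrementing the rank of `root t` exactly when the two root ranks are equal. -/
noncomputable def merge (t : PreTree V) (s : PreTree W) : PreTree (V ⊕ W) where
  root := Sum.inl t.root
  parent := fun z => match z with
    | Sum.inl v => Sum.inl (t.parent v)
    | Sum.inr w => if w = s.root then Sum.inl t.root else Sum.inr (s.parent w)
  rank := fun z => match z with
    | Sum.inl v =>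
        if v = t.root ∧ t.rank t.root = s.rank s.root then t.rank v + 1 else t.rank v
    | Sum.inr w => s.rank w

/-- Collapse: reattach every non-root (weak) ancestor of `x` directly to the root. -/
noncomputable def collapse (t : PreTree V) (x : V) : PreTree V where
  root := t.root
  parent := fun y => if y ≠ t.root ∧ t.Anc y x then t.root else t.parent y
  rank := t.rank

/-- `s ⪯ t` : every ancestor relation of `s` also holds in `t`. -/
def Le (s t : PreTree V) : Prop := ∀ x y, s.Anc x y → t.Anc x y

/-- Isomorphism of (pre)trees: a bijection preserving root, parent and rank. -/
structure Iso (t : PreTree V) (s : PreTree W) where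
  toEquiv : V ≃ W
  map_root : toEquiv t.root = s.root
  map_parent : ∀ x, toEquiv (t.parent x) = s.parent (toEquiv x)
  map_rank : ∀ x, s.rank (toEquiv x) = t.rank x

theorem anc_parent_of_ne {t : PreTree V} {x y : V} (h : t.Anc x y) (hne : y ≠ x) :
    t.Anc x (t.parent y) := by
  obtain ⟨k, hk⟩ := h
  cases k with
  | zero => exact absurd hk hne
  | succ n => exact ⟨n, by rw [← hk, Function.iterate_succ_apply]⟩

/-- The subtree of `t` rooted at `x`, on the node set of (weak) descendants of `x`. -/
noncomputable def subtree (t : PreTree V) (x : V) : PreTree {y : V // t.Anc x y} where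
  root := ⟨x, ⟨0, rfl⟩⟩
  rank := fun y => t.rank y
  parent := fun y =>
    if h : (y : V) = x then ⟨x, ⟨0, rfl⟩⟩ else ⟨t.parent y, anc_parent_of_ne y.2 h⟩

/-- `DepthIs t x k` : the depth of `x` in `t` is exactly `k`. -/
def DepthIs (t : PreTree V) (x : V) (k : ℕ) : Prop :=
  t.parent^[k] x = t.root ∧ ∀ j < k, t.parent^[j] x ≠ t.root

end PreTree

open PreTree

/-- Union trees: least class (up to isomorphism) containing singletons and closed
under `merge` of trees whose root ranks satisfy `rank t ≥ rank s`. -/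
inductive IsUnion : {V : Type} → PreTree V → Prop
  | singleton {V : Type} (t : PreTree V)
      (h1 : ∀ x, x = t.root) (h2 : t.rank t.root = 0) : IsUnion t
  | merge {V W : Type} (t : PreTree V) (s : PreTree W)
      (ht : IsUnion t) (hs : IsUnion s) (hr : s.rank s.root ≤ t.rank t.root) :
      IsUnion (t.merge s)
  | iso {V W : Type} (t : PreTree V) (s : PreTree W)
      (ht : IsUnion t) (hi : Nonempty (t.Iso s)) : IsUnion s

/-- Union-Find trees: least class (up to isomorphism) containing singletons and
closed under `merge` (with `rank t ≥ rank s`) and `collapse`. -/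
inductive IsUnionFind : {V : Type} → PreTree V → Prop
  | singleton {V : Type} (t : PreTree V)
      (h1 : ∀ x, x = t.root) (h2 : t.rank t.root = 0) : IsUnionFind t
  | merge {V W : Type} (t : PreTree V) (s : PreTree W)
      (ht : IsUnionFind t) (hs : IsUnionFind s) (hr : s.rank s.root ≤ t.rank t.root) :
      IsUnionFind (t.merge s)
  | collapse {V : Type} (t : PreTree V) (x : V) (ht : IsUnionFind t) :
      IsUnionFind (t.collapse x)
  | iso {V W : Type} (t : PreTree V) (s : PreTree W)
      (ht : IsUnionFind t) (hi : Nonempty (t.Iso s)) : IsUnionFind s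

/-- An apple of weight `a`: a root of rank 2 (node `0`), one depth-one child of
rank 0 (node `1`) and `a` depth-one children of rank 1. -/
noncomputable def appleTree (a : ℕ) : PreTree (Fin (a + 2)) where
  root := 0
  parent := fun _ => 0
  rank := fun i => if i = 0 then 2 else if i = 1 then 0 else 1

lemma Nat.card_subtype_eq_card_ne_add {V : Type} [Finite V] (q : V → Prop) (a : V) :
    Nat.card {v // q v} = Nat.card {v // v ≠ a ∧ q v} + if q a then 1 else 0 := by
  change Nat.card {v | q v} = Nat.card {v | v ≠ a ∧ q v} + _
  have hdiff : {v | v ≠ a ∧ q v} = {v | q v} \ {a} := by ext; simp [and_comm]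
  rw [Nat.card_coe_set_eq, Nat.card_coe_set_eq, hdiff]
  split_ifs with ha
  · exact (Set.ncard_sdiff_singleton_add_one ha (Set.toFinite _)).symm
  · rw [Set.sdiff_singleton_eq_self (show a ∉ {v | q v} from ha), add_zero]

namespace PreTree

variable {V W : Type}

lemma merge_rank_inl_of_ne (t : PreTree V) (s : PreTree W) {v : V} (hv : v ≠ t.root) :
    (t.merge s).rank (Sum.inl v) = t.rank v := by
  simp [merge, hv]

lemma merge_rank_root_ne_zero (t : PreTree V) (s : PreTree W)
    (hr : s.rank s.root ≤ t.rank t.root) : (t.merge s).rank (t.merge s).root ≠ 0 := by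
  simp only [merge, true_and]
  split_ifs <;> omega

lemma card_merge_rank [Finite V] [Finite W] (t : PreTree V) (s : PreTree W) (p : ℕ → Prop) :
    Nat.card {z // p ((t.merge s).rank z)} =
      Nat.card {v // v ≠ t.root ∧ p (t.rank v)} +
        (if p ((t.merge s).rank (t.merge s).root) then 1 else 0) +
          Nat.card {w // p (s.rank w)} := by
  rw [Nat.card_congr (Equiv.subtypeSum (p := fun z => p ((t.merge s).rank z))), Nat.card_sum,
    Nat.card_subtype_eq_card_ne_add _ t.root]
  congr 2
  exact Nat.card_congr <| Equiv.subtypeEquivRight fun v =>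
    and_congr_right fun hv => by rw [merge_rank_inl_of_ne t s hv]

end PreTree

lemma IsUnionFind.finite {V : Type} {t : PreTree V} (h : IsUnionFind t) : Finite V := by
  induction h with
  | singleton t h1 _ => exact @Finite.of_subsingleton _ ⟨fun x y => (h1 x).trans (h1 y).symm⟩
  | merge => infer_instance
  | collapse _ _ _ ih => exact ih
  | iso t s _ hi ih => exact Finite.of_equiv _ hi.some.toEquiv

namespace PreTree.Iso

variable {V W : Type} {t : PreTree V} {s : PreTree W}

lemma rank_root (e : t.Iso s) : s.rank s.root = t.rank t.root := by
  rw [← e.map_root, e.map_rank]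

lemma card_rank (e : t.Iso s) (p : ℕ → Prop) :
    Nat.card {x // p (t.rank x)} = Nat.card {y // p (s.rank y)} :=
  Nat.card_congr <| e.toEquiv.subtypeEquiv fun x => by rw [e.map_rank]

end PreTree.Iso

theorem IsUnionFind.card_rank_ne_zero_add_le {V : Type} {t : PreTree V} (h : IsUnionFind t) :
    Nat.card {x // t.rank x ≠ 0} + (if t.rank t.root = 0 then 1 else 0) ≤
      Nat.card {x // t.rank x = 0} := by
  induction h with
  | @singleton V t h1 h2 =>
      have := (IsUnionFind.singleton t h1 h2).finite
      have hnonroot (q : V → Prop) : Nat.card {v // v ≠ t.root ∧ q v} = 0 :=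
        @Nat.card_of_isEmpty _ ⟨fun v => v.2.1 (h1 v)⟩
      rw [Nat.card_subtype_eq_card_ne_add _ t.root,
        Nat.card_subtype_eq_card_ne_add (fun x => t.rank x = 0) t.root, hnonroot, hnonroot, h2]
      simp
  | @merge V W t s ht hs hr iht ihs =>
      have := ht.finite
      have := hs.finite
      rw [Nat.card_subtype_eq_card_ne_add _ t.root,
        Nat.card_subtype_eq_card_ne_add (fun x => t.rank x = 0) t.root] at iht
      have hroot := merge_rank_root_ne_zero t s hr
      rw [card_merge_rank t s (· ≠ 0), card_merge_rank t s (· = 0)]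
      split_ifs at * <;> omega
  | collapse _ _ _ ih => exact ih
  | iso t s _ hi ih =>
      obtain ⟨e⟩ := hi
      rwa [← e.card_rank (· ≠ 0), ← e.card_rank (· = 0), e.rank_root]

lemma appleTree_rank_eq_zero_iff {a : ℕ} {i : Fin (a + 2)} :
    (appleTree a).rank i = 0 ↔ i = 1 := by
  have : (1 : Fin (a + 2)) ≠ 0 := by simp
  simp only [appleTree]
  split_ifs <;> simp_all

lemma appleTree_card_rank_eq_zero (a : ℕ) : Nat.card {i // (appleTree a).rank i = 0} = 1 := by
  simp only [appleTree_rank_eq_zero_iff, Nat.card_eq_fintype_card, Fintype.card_subtype_eq]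

lemma appleTree_card_rank_ne_zero (a : ℕ) :
    Nat.card {i // (appleTree a).rank i ≠ 0} = a + 1 := by
  simp only [ne_eq, appleTree_rank_eq_zero_iff, Nat.card_eq_fintype_card,
    Fintype.card_subtype_compl, Fintype.card_subtype_eq, Fintype.card_fin]
  omega

/-- an apple of weight `a ≥ 1` is not a Union-Find tree. -/
theorem apple_not_isUnionFind (a : ℕ) (ha : 1 ≤ a) : ¬ IsUnionFind (appleTree a) := by
  intro h
  have := h.card_rank_ne_zero_add_le
  rw [appleTree_card_rank_ne_zero, appleTree_card_rank_eq_zero] at this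
  omega
end

section
/- If t = merge(t_1, t_2) where t_1, t_2 are ranked trees with rank(t_1) ≥ rank(t_2), and t_1 ⊢* s_1, t_2 ⊢* s_2 for trees s_1, s_2 on the respective node sets, then t ⊢* merge(s_1, s_2). -/
open scoped Classical

open PreTree

/-! Pushes in either part lift to the merge, one step at a time. A push changes neither the root
nor the ranks, so the rank bump at the merged root is the same before and after it; and the node
being pushed is never a root, so its parent pointer is one that the merge leaves alone. -/

namespace PreTree

variable {V W : Type}

@[simp]
lemma merge_root (t : PreTree V) (s : PreTree W) : (t.merge s).root = Sum.inl t.root := rfl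

@[simp]
lemma merge_parent_inl (t : PreTree V) (s : PreTree W) (v : V) :
    (t.merge s).parent (Sum.inl v) = Sum.inl (t.parent v) := rfl

lemma merge_parent_inr (t : PreTree V) (s : PreTree W) (w : W) :
    (t.merge s).parent (Sum.inr w) =
      if w = s.root then Sum.inl t.root else Sum.inr (s.parent w) := rfl

lemma merge_parent_inr_of_ne_root (t : PreTree V) {s : PreTree W} {w : W} (hw : w ≠ s.root) :
    (t.merge s).parent (Sum.inr w) = Sum.inr (s.parent w) := if_neg hw

@[simp]
lemma merge_rank_inr (t : PreTree V) (s : PreTree W) (w : W) :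
    (t.merge s).rank (Sum.inr w) = s.rank w := rfl

lemma merge_rank_inl_of_ne_root {t : PreTree V} (s : PreTree W) {v : V} (hv : v ≠ t.root) :
    (t.merge s).rank (Sum.inl v) = t.rank v :=
  if_neg fun h => hv h.1

lemma rank_le_merge_rank_inl (t : PreTree V) (s : PreTree W) (v : V) :
    t.rank v ≤ (t.merge s).rank (Sum.inl v) := by
  show t.rank v ≤ if _ then _ else _
  split
  · exact Nat.le_succ _
  · exact le_rfl

@[simp]
lemma push_root (t : PreTree V) (x y : V) : (t.push x y).root = t.root := rfl

@[simp]
lemma push_rank (t : PreTree V) (x y : V) : (t.push x y).rank = t.rank := rfl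

lemma push_parent (t : PreTree V) (x y : V) :
    (t.push x y).parent = Function.update t.parent x y := rfl

lemma merge_push_left (t : PreTree V) (s : PreTree W) (x y : V) :
    (t.push x y).merge s = (t.merge s).push (Sum.inl x) (Sum.inl y) := by
  show PreTree.mk _ _ _ = PreTree.mk _ _ _
  congr 1
  funext z
  rcases z with v | w
  · by_cases hv : v = x <;> simp [push_parent, hv]
  · simp [merge_parent_inr]

lemma merge_push_right (t : PreTree V) (s : PreTree W) {x : W} (y : W) (hx : x ≠ s.root) :
    t.merge (s.push x y) = (t.merge s).push (Sum.inr x) (Sum.inr y) := by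
  show PreTree.mk _ _ _ = PreTree.mk _ _ _
  congr 1
  funext z
  rcases z with v | w
  · simp
  · by_cases hw : w = x <;> simp [push_parent, merge_parent_inr, hw, hx]

lemma Siblings.merge_left {t : PreTree V} {x y : V} (h : t.Siblings x y) (s : PreTree W) :
    (t.merge s).Siblings (Sum.inl x) (Sum.inl y) := by
  obtain ⟨hxy, hx, hy, hp⟩ := h
  exact ⟨by simpa using hxy, by simpa using hx, by simpa using hy, by simp [hp]⟩

lemma Siblings.merge_right (t : PreTree V) {s : PreTree W} {x y : W} (h : s.Siblings x y) :
    (t.merge s).Siblings (Sum.inr x) (Sum.inr y) := by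
  obtain ⟨hxy, hx, hy, hp⟩ := h
  refine ⟨by simpa using hxy, by simp, by simp, ?_⟩
  rw [merge_parent_inr_of_ne_root t hx, merge_parent_inr_of_ne_root t hy, hp]

lemma PushStep.merge_left {t t' : PreTree V} (s : PreTree W) (h : t.PushStep t') :
    (t.merge s).PushStep (t'.merge s) := by
  obtain ⟨x, y, hsib, hrank, rfl⟩ := h
  refine ⟨Sum.inl x, Sum.inl y, hsib.merge_left s, ?_, merge_push_left t s x y⟩
  rw [merge_rank_inl_of_ne_root s hsib.2.1]
  exact hrank.trans_le (rank_le_merge_rank_inl t s y)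

lemma PushStep.merge_right (t : PreTree V) {s s' : PreTree W} (h : s.PushStep s') :
    (t.merge s).PushStep (t.merge s') := by
  obtain ⟨x, y, hsib, hrank, rfl⟩ := h
  exact ⟨Sum.inr x, Sum.inr y, hsib.merge_right t, hrank, merge_push_right t s y hsib.2.1⟩

end PreTree

theorem merge_pushes_general {V W : Type} (t₁ s₁ : PreTree V) (t₂ s₂ : PreTree W)
    (p1 : Relation.ReflTransGen PreTree.PushStep t₁ s₁)
    (p2 : Relation.ReflTransGen PreTree.PushStep t₂ s₂) :
    Relation.ReflTransGen PreTree.PushStep (t₁.merge t₂) (s₁.merge s₂) :=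
  (p1.lift (·.merge t₂) fun _ _ => PushStep.merge_left t₂).trans
    (p2.lift (s₁.merge ·) fun _ _ => PushStep.merge_right s₁)

/-- pushes performed in the two merged trees can be performed in the
merge: if `t₁ ⊢* s₁` and `t₂ ⊢* s₂` then `merge t₁ t₂ ⊢* merge s₁ s₂`. -/
theorem merge_pushes {V W : Type} (t₁ s₁ : PreTree V) (t₂ s₂ : PreTree W)
    (h1 : t₁.IsRanked) (h2 : t₂.IsRanked) (hr : t₂.rank t₂.root ≤ t₁.rank t₁.root)
    (p1 : Relation.ReflTransGen PreTree.PushStep t₁ s₁)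
    (p2 : Relation.ReflTransGen PreTree.PushStep t₂ s₂) :
    Relation.ReflTransGen PreTree.PushStep (t₁.merge t₂) (s₁.merge s₂) :=
  merge_pushes_general t₁ s₁ t₂ s₂ p1 p2
end
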